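/- Let W be a channel with arbitrary input alphabet 𝒳 and finite output alphabet 𝒴, let n ≥ 1, let 0 < δ ≤ √n · log₂|𝒴|, and let x^n, x'^n ∈ 𝒳^n be such that 1 − ½‖W_{x^n} − W_{x'^n}‖₁ ≤ ε. Then W_{x'^n}(𝒯_{x^n}^δ) ≤ 2 · 2^{−δ²/(36·K(|𝒴|))} + ε · (1 + 2^{2δ√n} · 2^{H(W_{x^n}) − H(W_{x'^n})}), where K(d) = (log₂ max{d,3})². -/

import Mathlib

open Real Filter

namespace DIChannel

variable {X Y : Type*}

/-- `p` is a probability distribution on the finite alphabet `Y`. -/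
def IsDist [Fintype Y] (p : Y → ℝ) : Prop := (∀ y, 0 ≤ p y) ∧ ∑ y, p y = 1

/-- Product (memoryless) output distribution `W_{x^n}` on `Y^n`. -/
noncomputable def prodP [Fintype Y] (W : X → Y → ℝ) {n : ℕ} (u : Fin n → X)
    (y : Fin n → Y) : ℝ := ∏ i, W (u i) (y i)

/-- Probability of a set of output words under `W_{x^n}`. -/
noncomputable def probOf [Fintype Y] (W : X → Y → ℝ) {n : ℕ} (u : Fin n → X)
    (E : Finset (Fin n → Y)) : ℝ := ∑ y ∈ E, prodP W u y

/-- Shannon entropy, base 2. -/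
noncomputable def H2 [Fintype Y] (p : Y → ℝ) : ℝ := -∑ y, p y * Real.logb 2 (p y)

/-- `H(W_{x^n}) = ∑ i H(W_{x_i})`. -/
noncomputable def Hn [Fintype Y] (W : X → Y → ℝ) {n : ℕ} (u : Fin n → X) : ℝ :=
  ∑ i, H2 (W (u i))

open scoped Classical in
/-- The entropy conditional typical set `𝒯_{x^n}^δ` (points of zero probability excluded). -/
noncomputable def typSet [Fintype Y] (W : X → Y → ℝ) {n : ℕ} (u : Fin n → X) (δ : ℝ) :
    Finset (Fin n → Y) :=
  Finset.univ.filter fun y =>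
    0 < prodP W u y ∧ |Real.logb 2 (prodP W u y) + Hn W u| ≤ δ * Real.sqrt n

/-- `K(d) = (log₂ max{d,3})²`. -/
noncomputable def Kf (d : ℕ) : ℝ := (Real.logb 2 (max d 3 : ℕ)) ^ 2

/-- Total variation distance `½‖p − q‖₁` between distributions on a finite set. -/
noncomputable def tvd {Z : Type*} [Fintype Z] (p q : Z → ℝ) : ℝ := (∑ z, |p z - q z|) / 2

end DIChannel

open DIChannel

/-!
Split the typical set according to whether `W_{x'^n}(y) ≤ c · W_{x^n}(y)`, where
`c = 2^{2δ√n} · 2^{H(W_{x^n}) - H(W_{x'^n})}`. On the first part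
`W_{x'^n} ≤ (1 + c) min(W_{x^n}, W_{x'^n})`, and the overlap `∑ min(W_{x^n}, W_{x'^n})`
equals `1 - ½‖W_{x^n} - W_{x'^n}‖₁ ≤ ε`. On the second part, typicality of `y` for `x^n`
forces `W_{x'^n}(y) ≥ 2^{δ√n - H(W_{x'^n})}`: an upper-tail event for the self-information
`-log₂ W_{x'^n}`, whose mean is `H(W_{x'^n})`. A Chernoff bound, with the moment generating
function controlled by `exp t ≤ 1 + t + t²/2` for `t ≤ 0` and the second moment
`∑ p log² p ≤ 18 log² max{|𝒴|, 3}`, makes this part at most `2^{-δ²/(36K)}`.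
-/

namespace Real

theorem exp_le_one_add_add_sq_div_two_of_nonpos {x : ℝ} (hx : x ≤ 0) :
    exp x ≤ 1 + x + x ^ 2 / 2 := by
  have hderiv (t : ℝ) :
      HasDerivAt (fun t => 1 + t + t ^ 2 / 2 - exp t) (1 + t - exp t) t := by
    refine ((((hasDerivAt_id' t).const_add 1).add ((hasDerivAt_pow 2 t).div_const 2)).sub
      (hasDerivAt_exp t)).congr_deriv ?_
    norm_num
  have hanti : Antitone fun t => 1 + t + t ^ 2 / 2 - exp t :=
    antitone_of_deriv_nonpos (fun t => (hderiv t).differentiableAt) fun t => by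
      rw [(hderiv t).deriv]
      linarith [add_one_le_exp t]
  simpa using hanti hx

/-- Writing `t = r³`, the bound follows from `|r log r| ≤ 1` when `r < 1/d` and from
`log (1/r) ≤ log d` otherwise. -/
theorem mul_log_sq_le {t d : ℝ} (ht0 : 0 ≤ t) (ht1 : t ≤ 1) (hd : 1 ≤ d) :
    t * log t ^ 2 ≤ 9 * t * log d ^ 2 + 9 / d := by
  obtain ⟨r, hr0, hr1, rfl⟩ : ∃ r, 0 ≤ r ∧ r ≤ 1 ∧ r ^ 3 = t :=
    ⟨t ^ ((3 : ℕ)⁻¹ : ℝ), by positivity, rpow_le_one ht0 ht1 (by positivity),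
      rpow_inv_natCast_pow ht0 (by norm_num)⟩
  have hd0 : 0 < d := by linarith
  rw [log_pow, Nat.cast_ofNat]
  rcases lt_or_ge r d⁻¹ with hr | hr
  · rcases hr0.eq_or_lt with rfl | hr0
    · simp only [ne_eq, OfNat.ofNat_ne_zero, not_false_eq_true, zero_pow, zero_mul]
      positivity
    have hrlog : (log r * r) ^ 2 ≤ 1 := by
      rw [← sq_abs]
      nlinarith [abs_log_mul_self_lt r hr0 hr1, abs_nonneg (log r * r)]
    have : r ≤ 1 / d := by rw [one_div]; exact hr.le
    calc r ^ 3 * (3 * log r) ^ 2 = 9 * r * (log r * r) ^ 2 := by ring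
      _ ≤ 9 * (1 / d) * 1 := by gcongr
      _ ≤ 9 * r ^ 3 * log d ^ 2 + 9 / d := by
        have : 0 ≤ 9 * r ^ 3 * log d ^ 2 := by positivity
        linarith [show 9 * (1 / d) * 1 = 9 / d by ring]
  · have hlog : -log d ≤ log r := by
      rw [← log_inv]
      exact log_le_log (by positivity) hr
    have hsq : log r ^ 2 ≤ log d ^ 2 := by
      nlinarith [log_nonpos hr0 hr1, log_nonneg hd]
    have : 0 ≤ 9 / d := by positivity
    nlinarith [pow_nonneg hr0 3]

theorem rpow_one_add_le {t s : ℝ} (ht0 : 0 ≤ t) (ht1 : t ≤ 1) (hs : 0 ≤ s) :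
    t ^ (1 + s) ≤ t + s * (t * log t) + s ^ 2 / 2 * (t * log t ^ 2) := by
  rcases ht0.eq_or_lt with rfl | ht0
  · simp [zero_rpow (by positivity : 1 + s ≠ 0)]
  have hexp : exp (s * log t) ≤ 1 + s * log t + (s * log t) ^ 2 / 2 :=
    exp_le_one_add_add_sq_div_two_of_nonpos (mul_nonpos_of_nonneg_of_nonpos hs
      (log_nonpos ht0.le ht1))
  calc t ^ (1 + s) = t * exp (s * log t) := by
        rw [rpow_one_add' ht0.le (by positivity), rpow_def_of_pos ht0, mul_comm s]
    _ ≤ t * (1 + s * log t + (s * log t) ^ 2 / 2) := by gcongr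
    _ = t + s * (t * log t) + s ^ 2 / 2 * (t * log t ^ 2) := by ring

end Real

open Real

namespace DIChannel

section Distributions

variable {Z : Type*} [Fintype Z]

theorem sum_min_eq_one_sub_tvd {p q : Z → ℝ} (hp : ∑ z, p z = 1) (hq : ∑ z, q z = 1) :
    ∑ z, min (p z) (q z) = 1 - tvd p q := by
  have hmin (z : Z) : min (p z) (q z) = (p z + q z - |p z - q z|) / 2 := by
    rcases le_total (p z) (q z) with h | h
    · rw [min_eq_left h, abs_of_nonpos (by linarith)]; ring
    · rw [min_eq_right h, abs_of_nonneg (by linarith)]; ring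
  simp only [hmin, tvd, ← Finset.sum_div, Finset.sum_sub_distrib, Finset.sum_add_distrib, hp, hq]
  ring

theorem sum_le_one_add_mul_one_sub_tvd {p q : Z → ℝ} (hp0 : ∀ z, 0 ≤ p z)
    (hq0 : ∀ z, 0 ≤ q z) (hp : ∑ z, p z = 1) (hq : ∑ z, q z = 1) {c : ℝ} (hc : 0 ≤ c)
    {A : Finset Z} (hA : ∀ z ∈ A, q z ≤ c * p z) :
    ∑ z ∈ A, q z ≤ (1 + c) * (1 - tvd p q) := by
  have hmin : ∀ z ∈ A, q z ≤ (1 + c) * min (p z) (q z) := by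
    intro z hz
    rcases le_total (p z) (q z) with h | h
    · rw [min_eq_left h]; nlinarith [hA z hz, hp0 z]
    · rw [min_eq_right h]; nlinarith [hq0 z]
  calc ∑ z ∈ A, q z ≤ ∑ z ∈ A, (1 + c) * min (p z) (q z) := Finset.sum_le_sum hmin
    _ ≤ ∑ z, (1 + c) * min (p z) (q z) :=
      Finset.sum_le_sum_of_subset_of_nonneg (Finset.subset_univ A) fun z _ _ =>
        mul_nonneg (by positivity) (le_min (hp0 z) (hq0 z))
    _ = (1 + c) * (1 - tvd p q) := by rw [← Finset.mul_sum, sum_min_eq_one_sub_tvd hp hq]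

theorem sum_le_rpow_neg_mul_sum_rpow {q : Z → ℝ} (hq0 : ∀ z, 0 ≤ q z) {τ s : ℝ} (hτ : 0 < τ)
    (hs : 0 ≤ s) {S : Finset Z} (hS : ∀ z ∈ S, τ ≤ q z) :
    ∑ z ∈ S, q z ≤ τ ^ (-s) * ∑ z, q z ^ (1 + s) := by
  have hterm : ∀ z ∈ S, q z ≤ τ ^ (-s) * q z ^ (1 + s) := by
    intro z hz
    have hqz : 0 < q z := hτ.trans_le (hS z hz)
    calc q z ≤ q z * (q z / τ) ^ s :=
          le_mul_of_one_le_right hqz.le (one_le_rpow ((one_le_div hτ).2 (hS z hz)) hs)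
      _ = τ ^ (-s) * q z ^ (1 + s) := by
          rw [div_rpow hqz.le hτ.le, rpow_neg hτ.le, rpow_one_add' hqz.le (by positivity)]
          ring
  calc ∑ z ∈ S, q z ≤ ∑ z ∈ S, τ ^ (-s) * q z ^ (1 + s) := Finset.sum_le_sum hterm
    _ ≤ ∑ z, τ ^ (-s) * q z ^ (1 + s) :=
      Finset.sum_le_sum_of_subset_of_nonneg (Finset.subset_univ S) fun z _ _ =>
        mul_nonneg (rpow_nonneg hτ.le _) (rpow_nonneg (hq0 z) _)
    _ = τ ^ (-s) * ∑ z, q z ^ (1 + s) := (Finset.mul_sum ..).symm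

theorem le_one_of_sum_eq_one {p : Z → ℝ} (hp0 : ∀ z, 0 ≤ p z) (hp : ∑ z, p z = 1) (z : Z) :
    p z ≤ 1 :=
  hp ▸ Finset.single_le_sum (fun z _ => hp0 z) (Finset.mem_univ z)

theorem sum_rpow_one_add_le_exp {p : Z → ℝ} (hp0 : ∀ z, 0 ≤ p z) (hp : ∑ z, p z = 1)
    {s Λ : ℝ} (hs : 0 ≤ s) (hΛ : ∑ z, p z * log (p z) ^ 2 ≤ Λ) :
    ∑ z, p z ^ (1 + s) ≤ exp (s * ∑ z, p z * log (p z) + s ^ 2 * Λ / 2) := by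
  calc ∑ z, p z ^ (1 + s)
      ≤ ∑ z, (p z + s * (p z * log (p z)) + s ^ 2 / 2 * (p z * log (p z) ^ 2)) :=
        Finset.sum_le_sum fun z _ => rpow_one_add_le (hp0 z) (le_one_of_sum_eq_one hp0 hp z) hs
    _ = 1 + s * ∑ z, p z * log (p z) + s ^ 2 / 2 * ∑ z, p z * log (p z) ^ 2 := by
        rw [Finset.sum_add_distrib, Finset.sum_add_distrib, ← Finset.mul_sum, ← Finset.mul_sum,
          hp]
    _ ≤ 1 + (s * ∑ z, p z * log (p z) + s ^ 2 * Λ / 2) := by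
        have : s ^ 2 / 2 * ∑ z, p z * log (p z) ^ 2 ≤ s ^ 2 / 2 * Λ := by gcongr
        linarith
    _ ≤ exp (s * ∑ z, p z * log (p z) + s ^ 2 * Λ / 2) := by
        rw [add_comm]; exact add_one_le_exp _

theorem sum_mul_log_sq_le {p : Z → ℝ} (hp0 : ∀ z, 0 ≤ p z) (hp : ∑ z, p z = 1) {d : ℝ}
    (hd : 1 ≤ d) (hcard : (Fintype.card Z : ℝ) ≤ d) :
    ∑ z, p z * log (p z) ^ 2 ≤ 9 * (log d ^ 2 + 1) := by
  have hd0 : 0 < d := by linarith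
  calc ∑ z, p z * log (p z) ^ 2 ≤ ∑ z, (9 * p z * log d ^ 2 + 9 / d) :=
        Finset.sum_le_sum fun z _ => mul_log_sq_le (hp0 z) (le_one_of_sum_eq_one hp0 hp z) hd
    _ = 9 * log d ^ 2 + Fintype.card Z * (9 / d) := by
        rw [Finset.sum_add_distrib, ← Finset.sum_mul, ← Finset.mul_sum, hp, Finset.sum_const,
          Finset.card_univ, nsmul_eq_mul, mul_one]
    _ ≤ 9 * log d ^ 2 + d * (9 / d) := by gcongr
    _ = 9 * (log d ^ 2 + 1) := by field_simp

end Distributions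

section Channel

variable {X Y : Type*} [Fintype Y] {W : X → Y → ℝ}

theorem prodP_nonneg (hW : ∀ x, IsDist (W x)) {n : ℕ} (u : Fin n → X) (y : Fin n → Y) :
    0 ≤ prodP W u y :=
  Finset.prod_nonneg fun i _ => (hW (u i)).1 (y i)

theorem sum_prodP_rpow (hW : ∀ x, IsDist (W x)) {n : ℕ} (u : Fin n → X) (r : ℝ) :
    ∑ y, prodP W u y ^ r = ∏ i, ∑ b, W (u i) b ^ r := by
  rw [Fintype.prod_sum]
  refine Finset.sum_congr rfl fun y _ => ?_
  exact (finsetProd_rpow _ _ (fun i _ => (hW (u i)).1 (y i)) r).symm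

theorem sum_prodP (hW : ∀ x, IsDist (W x)) {n : ℕ} (u : Fin n → X) :
    ∑ y, prodP W u y = 1 := by
  simpa [(hW _).2] using sum_prodP_rpow hW u 1

theorem sum_mul_log_eq_neg_log_two_mul_H2 (p : Y → ℝ) :
    ∑ y, p y * log (p y) = -(log 2 * H2 p) := by
  simp only [H2, logb, mul_neg, neg_neg, Finset.mul_sum]
  refine Finset.sum_congr rfl fun y _ => ?_
  field_simp

theorem sum_prodP_rpow_one_add_le (hW : ∀ x, IsDist (W x)) {n : ℕ} (u : Fin n → X)
    {s Λ : ℝ} (hs : 0 ≤ s) (hΛ : ∀ x, ∑ y, W x y * log (W x y) ^ 2 ≤ Λ) :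
    ∑ y, prodP W u y ^ (1 + s) ≤ exp (-(s * (log 2 * Hn W u)) + n * (s ^ 2 * Λ / 2)) := by
  rw [sum_prodP_rpow hW]
  calc ∏ i, ∑ b, W (u i) b ^ (1 + s)
      ≤ ∏ i, exp (-(s * (log 2 * H2 (W (u i)))) + s ^ 2 * Λ / 2) := by
        refine Finset.prod_le_prod (fun i _ => Finset.sum_nonneg fun b _ =>
          rpow_nonneg ((hW (u i)).1 b) _) fun i _ => ?_
        have := sum_rpow_one_add_le_exp (hW (u i)).1 (hW (u i)).2 hs (hΛ (u i))
        rwa [sum_mul_log_eq_neg_log_two_mul_H2, mul_neg] at this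
    _ = exp (-(s * (log 2 * Hn W u)) + n * (s ^ 2 * Λ / 2)) := by
        rw [← exp_sum, Finset.sum_add_distrib, Finset.sum_const, Finset.card_univ,
          Fintype.card_fin, nsmul_eq_mul, Hn, Finset.mul_sum, Finset.mul_sum,
          Finset.sum_neg_distrib]

theorem probOf_le_exp_of_rpow_le (hW : ∀ x, IsDist (W x)) {n : ℕ} (u : Fin n → X)
    {s Λ a : ℝ} (hs : 0 ≤ s) (hΛ : ∀ x, ∑ y, W x y * log (W x y) ^ 2 ≤ Λ)
    {S : Finset (Fin n → Y)} (hS : ∀ y ∈ S, 2 ^ (a - Hn W u) ≤ prodP W u y) :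
    probOf W u S ≤ exp (-(s * (log 2 * a)) + n * (s ^ 2 * Λ / 2)) := by
  calc probOf W u S
      ≤ (2 ^ (a - Hn W u)) ^ (-s) * ∑ y, prodP W u y ^ (1 + s) :=
        sum_le_rpow_neg_mul_sum_rpow (prodP_nonneg hW u) (by positivity) hs hS
    _ ≤ (2 ^ (a - Hn W u)) ^ (-s) * exp (-(s * (log 2 * Hn W u)) + n * (s ^ 2 * Λ / 2)) := by
        gcongr
        exact sum_prodP_rpow_one_add_le hW u hs hΛ
    _ = exp (-(s * (log 2 * a)) + n * (s ^ 2 * Λ / 2)) := by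
        rw [← rpow_mul zero_le_two, rpow_def_of_pos two_pos, ← exp_add]
        ring_nf

theorem probOf_le_exp_neg_sq_of_rpow_le (hW : ∀ x, IsDist (W x)) {n : ℕ} (hn : n ≠ 0)
    (u : Fin n → X) {Λ a : ℝ} (hΛ0 : 0 < Λ) (hΛ : ∀ x, ∑ y, W x y * log (W x y) ^ 2 ≤ Λ)
    (ha : 0 ≤ a) {S : Finset (Fin n → Y)} (hS : ∀ y ∈ S, 2 ^ (a - Hn W u) ≤ prodP W u y) :
    probOf W u S ≤ exp (-(log 2 * a) ^ 2 / (2 * n * Λ)) := by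
  have hn' : (0 : ℝ) < n := by positivity
  convert probOf_le_exp_of_rpow_le hW u (s := log 2 * a / (n * Λ)) (by positivity) hΛ hS
    using 2
  field_simp
  ring

theorem probOf_le_two_rpow_of_rpow_le (hW : ∀ x, IsDist (W x)) {n : ℕ} (hn : n ≠ 0)
    (u : Fin n → X) {a : ℝ} (ha : 0 ≤ a) {S : Finset (Fin n → Y)}
    (hS : ∀ y ∈ S, 2 ^ (a - Hn W u) ≤ prodP W u y) :
    probOf W u S ≤ 2 ^ (-a ^ 2 / (36 * n * Kf (Fintype.card Y))) := by
  set d : ℝ := ((max (Fintype.card Y) 3 : ℕ) : ℝ)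
  have hd : 3 ≤ d := by simp [d]
  have hlogd : 1 ≤ log d := by
    rw [le_log_iff_exp_le (by positivity)]
    linarith [exp_one_lt_d9]
  have hΛ (x : X) : ∑ y, W x y * log (W x y) ^ 2 ≤ 18 * log d ^ 2 := by
    have := sum_mul_log_sq_le (hW x).1 (hW x).2 (d := d) (by linarith) (by simp [d])
    nlinarith
  have hK : Kf (Fintype.card Y) = (log d / log 2) ^ 2 := rfl
  calc probOf W u S ≤ exp (-(log 2 * a) ^ 2 / (2 * n * (18 * log d ^ 2))) :=
        probOf_le_exp_neg_sq_of_rpow_le hW hn u (by positivity) hΛ ha hS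
    _ ≤ exp (log 2 * (-a ^ 2 / (36 * n * Kf (Fintype.card Y)))) := by
        rw [exp_le_exp, hK]
        field_simp
        nlinarith [log_two_lt_d9, sq_nonneg a]
    _ = 2 ^ (-a ^ 2 / (36 * n * Kf (Fintype.card Y))) := (rpow_def_of_pos two_pos _).symm

theorem rpow_le_prodP_of_mem_typSet {n : ℕ} {u : Fin n → X} {δ : ℝ} {y : Fin n → Y}
    (hy : y ∈ typSet W u δ) : 2 ^ (-Hn W u - δ * √n) ≤ prodP W u y := by
  simp only [typSet, Finset.mem_filter, Finset.mem_univ, true_and] at hy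
  obtain ⟨hpos, habs⟩ := hy
  calc (2 : ℝ) ^ (-Hn W u - δ * √n) ≤ 2 ^ logb 2 (prodP W u y) :=
        rpow_le_rpow_of_exponent_le one_le_two (by linarith [(abs_le.1 habs).1])
    _ = prodP W u y := rpow_logb two_pos (by norm_num) hpos

end Channel

end DIChannel

theorem stmt1_general {X Y : Type*} [Fintype Y] (W : X → Y → ℝ) (hW : ∀ x, IsDist (W x))
    (n : ℕ) (hn : 1 ≤ n) (δ : ℝ) (hδ0 : 0 < δ)
    (u u' : Fin n → X) (ε : ℝ)
    (hsep : 1 - tvd (prodP W u) (prodP W u') ≤ ε) :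
    probOf W u' (typSet W u δ) ≤
      2 * (2 : ℝ) ^ (-δ ^ 2 / (36 * Kf (Fintype.card Y))) +
        ε * (1 + (2 : ℝ) ^ (2 * δ * Real.sqrt n) * (2 : ℝ) ^ (Hn W u - Hn W u')) := by
  set c := (2 : ℝ) ^ (2 * δ * √n) * 2 ^ (Hn W u - Hn W u') with hc
  set T := typSet W u δ
  set A := T.filter fun y => prodP W u' y ≤ c * prodP W u y
  set B := T.filter fun y => ¬prodP W u' y ≤ c * prodP W u y
  have hsplit : probOf W u' T = probOf W u' B + probOf W u' A :=
    (Finset.sum_filter_add_sum_filter_not _ _ _).symm.trans (add_comm _ _)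
  have hB : ∀ y ∈ B, 2 ^ (δ * √n - Hn W u') ≤ prodP W u' y := by
    intro y hy
    rw [Finset.mem_filter, not_le] at hy
    calc (2 : ℝ) ^ (δ * √n - Hn W u') = c * 2 ^ (-Hn W u - δ * √n) := by
          rw [hc, ← rpow_add two_pos, ← rpow_add two_pos]
          ring_nf
      _ ≤ c * prodP W u y := by gcongr; exact rpow_le_prodP_of_mem_typSet hy.1
      _ ≤ prodP W u' y := hy.2.le
  have htail : probOf W u' B ≤ 2 ^ (-δ ^ 2 / (36 * Kf (Fintype.card Y))) := by
    calc probOf W u' B ≤ 2 ^ (-(δ * √n) ^ 2 / (36 * n * Kf (Fintype.card Y))) :=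
          probOf_le_two_rpow_of_rpow_le hW (by omega) u' (by positivity) hB
      _ = 2 ^ (-δ ^ 2 / (36 * Kf (Fintype.card Y))) := by
          rw [mul_pow, sq_sqrt n.cast_nonneg]
          field_simp
  have hoverlap : probOf W u' A ≤ (1 + c) * ε :=
    (sum_le_one_add_mul_one_sub_tvd (prodP_nonneg hW u) (prodP_nonneg hW u') (sum_prodP hW u)
      (sum_prodP hW u') (by positivity) fun y hy => (Finset.mem_filter.1 hy).2).trans
      (by gcongr)
  have : 0 ≤ (2 : ℝ) ^ (-δ ^ 2 / (36 * Kf (Fintype.card Y))) := by positivity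
  rw [hsplit]
  linarith

/-- Hypothesis Testing Lemma (Lemma 2 of the paper): if the product output distributions of
`x^n` and `x'^n` are `ε`-distinguishable in total variation, then the typical set of `x^n`
has small probability under `W_{x'^n}`. -/
theorem stmt1 {X Y : Type*} [Fintype Y] (W : X → Y → ℝ) (hW : ∀ x, IsDist (W x))
    (n : ℕ) (hn : 1 ≤ n) (δ : ℝ) (hδ0 : 0 < δ)
    (hδ : δ ≤ Real.sqrt n * Real.logb 2 (Fintype.card Y))
    (u u' : Fin n → X) (ε : ℝ)
    (hsep : 1 - tvd (prodP W u) (prodP W u') ≤ ε) :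
    probOf W u' (typSet W u δ) ≤
      2 * (2 : ℝ) ^ (-δ ^ 2 / (36 * Kf (Fintype.card Y))) +
        ε * (1 + (2 : ℝ) ^ (2 * δ * Real.sqrt n) * (2 : ℝ) ^ (Hn W u - Hn W u')) :=
  stmt1_general W hW n hn δ hδ0 u u' ε hsep
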